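/- Let S be a finite set with data as above (m_v·d_v = r, gcd(b_v,d_v) = 1, ∑ b_v/d_v ∈ ℤ). Then ∏_{v ∈ S} ∏_{1 ≤ i ≤ r−1, d_v ∤ i} (1 − q_v^i) = ∏_{v ∈ S} ∏_{1 ≤ i ≤ r−1, d_v ∤ i} (q_v^i − 1), where q_v ≥ 2 are integers attached to each v ∈ S. -/

import Mathlib

/-!
Since `1 - q ^ i = -(q ^ i - 1)`, the two products differ by the sign `(-1) ^ N`, where
`N = ∑ v, (r - m v)` is the total number of factors (there are `r - m v` integers in `[1, r - 1]`
not divisible by `d v`). For `r` odd every `m v` is odd, so each `r - m v` is even. For `r` even,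
`r - m v ≡ b v * m v [MOD 2]`: if `m v` is odd then `d v` is even, so `b v` is odd. Multiplying
`∑ b v / d v = n` by `r` gives `∑ b v * m v = n * r`, which is even.
-/

open Finset

theorem Nat.card_filter_not_dvd_Icc_one_sub_one {r m d : ℕ} (hmd : m * d = r) :
    #{i ∈ Icc 1 (r - 1) | ¬ d ∣ i} = r - m := by
  rcases Nat.eq_zero_or_pos r with rfl | hr
  · simp
  obtain ⟨k, rfl⟩ : ∃ k, m = k + 1 :=
    Nat.exists_eq_succ_of_ne_zero (by rintro rfl; omega)
  have hd : 0 < d := Nat.pos_of_ne_zero (by rintro rfl; omega)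
  have hdiv : (r - 1) / d = k :=
    Nat.div_eq_of_lt_le (by rw [← hmd]; ring_nf; omega) (by omega)
  rw [show Icc 1 (r - 1) = Ioc 0 (r - 1) from Icc_add_one_left_eq_Ioc 0 _, filter_not,
    card_sdiff_of_subset (filter_subset _ _), Nat.Ioc_filter_dvd_card_eq_div, hdiv, Nat.card_Ioc]
  omega

theorem Nat.sub_modEq_mul_of_even {r m d : ℕ} (b : ℕ) (hr : Even r) (hr0 : r ≠ 0)
    (hmd : m * d = r) (hcop : b.Coprime d) : r - m ≡ b * m [MOD 2] := by
  have hmr : m ≤ r := Nat.le_of_dvd (Nat.pos_of_ne_zero hr0) ⟨d, hmd.symm⟩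
  rcases Nat.even_or_odd m with hm | hm
  · have hsub : Even (r - m) := (Nat.even_sub hmr).2 (iff_of_true hr hm)
    have hmul : Even (b * m) := hm.mul_left b
    rw [Nat.even_iff] at hsub hmul
    exact hsub.trans hmul.symm
  · have hd : Even d := (Nat.even_mul.1 (hmd ▸ hr)).resolve_left (Nat.not_even_iff_odd.2 hm)
    have hb : Odd b := (hcop.coprime_dvd_right hd.two_dvd).odd_of_right
    have hsub : Odd (r - m) := Nat.Even.sub_odd hmr hr hm
    have hmul : Odd (b * m) := hb.mul hm
    rw [Nat.odd_iff] at hsub hmul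
    exact hsub.trans hmul.symm

theorem Nat.even_sub_of_odd {r m d : ℕ} (hr : Odd r) (hmd : m * d = r) : Even (r - m) := by
  have hm : Odd m := (Nat.odd_mul.1 (hmd ▸ hr)).1
  exact (Nat.even_sub (Nat.le_of_dvd hr.pos ⟨d, hmd.symm⟩)).2
    (iff_of_false (Nat.not_even_iff_odd.2 hr) (Nat.not_even_iff_odd.2 hm))

section

variable {V : Type*} {S : Finset V} {r : ℕ} {b d m : V → ℕ}

theorem sum_mul_eq_mul_of_sum_div_eq (hd : ∀ v ∈ S, d v ≠ 0) (hmd : ∀ v ∈ S, m v * d v = r)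
    {n : ℤ} (hn : ∑ v ∈ S, (b v : ℚ) / d v = n) : ∑ v ∈ S, (b v * m v : ℤ) = n * r := by
  have hterm : ∀ v ∈ S, (b v * m v : ℚ) = b v / d v * r := by
    intro v hv
    rw [← hmd v hv]
    push_cast
    field_simp [hd v hv]
  have hsum : ∑ v ∈ S, (b v * m v : ℚ) = n * r := by rw [sum_congr rfl hterm, ← sum_mul, hn]
  exact_mod_cast hsum

theorem even_sum_sub_of_sum_div_eq_int (hcop : ∀ v ∈ S, (b v).Coprime (d v))
    (hmd : ∀ v ∈ S, m v * d v = r) (hint : ∃ n : ℤ, ∑ v ∈ S, (b v : ℚ) / d v = n) :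
    Even (∑ v ∈ S, (r - m v)) := by
  rcases Nat.even_or_odd r with hr | hr
  · rcases eq_or_ne r 0 with rfl | hr0
    · simp
    have hd : ∀ v ∈ S, d v ≠ 0 := fun v hv h ↦ hr0 (by rw [← hmd v hv, h, mul_zero])
    obtain ⟨n, hn⟩ := hint
    have hbm : Even (∑ v ∈ S, b v * m v) := by
      have : Even (∑ v ∈ S, (b v * m v : ℤ)) := by
        rw [sum_mul_eq_mul_of_sum_div_eq hd hmd hn]
        exact (Int.even_coe_nat r |>.2 hr).mul_left n
      exact_mod_cast this
    have hmod : ∑ v ∈ S, (r - m v) ≡ ∑ v ∈ S, b v * m v [MOD 2] :=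
      Nat.ModEq.sum fun v hv ↦ Nat.sub_modEq_mul_of_even (b v) hr hr0 (hmd v hv) (hcop v hv)
    rw [Nat.even_iff] at hbm ⊢
    exact Eq.trans hmod hbm
  · exact even_sum _ fun v hv ↦ Nat.even_sub_of_odd hr (hmd v hv)

end

theorem prod_one_sub_eq_prod_sub_one_general {V : Type*} (S : Finset V) (r : ℕ)
    (b d m : V → ℕ) (q : V → ℤ)
    (hcop : ∀ v ∈ S, Nat.Coprime (b v) (d v))
    (hmd : ∀ v ∈ S, m v * d v = r)
    (hint : ∃ n : ℤ, (∑ v ∈ S, (b v : ℚ) / (d v)) = n) :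
    (∏ v ∈ S, ∏ i ∈ (Finset.Icc 1 (r - 1)).filter (fun i => ¬ d v ∣ i),
        (1 - q v ^ i)) =
      ∏ v ∈ S, ∏ i ∈ (Finset.Icc 1 (r - 1)).filter (fun i => ¬ d v ∣ i),
        (q v ^ i - 1) := by
  have hsign : ∀ v ∈ S, ∏ i ∈ (Icc 1 (r - 1)).filter (fun i => ¬ d v ∣ i), (1 - q v ^ i) =
      (-1) ^ (r - m v) * ∏ i ∈ (Icc 1 (r - 1)).filter (fun i => ¬ d v ∣ i), (q v ^ i - 1) := by
    intro v hv
    rw [← Nat.card_filter_not_dvd_Icc_one_sub_one (hmd v hv), ← prod_neg]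
    simp only [neg_sub]
  rw [prod_congr rfl hsign, prod_mul_distrib, prod_pow_eq_pow_sum,
    (even_sum_sub_of_sum_div_eq_int hcop hmd hint).neg_one_pow, one_mul]

/-- With `m v * d v = r`, `gcd (b v) (d v) = 1` and `∑ b v / d v ∈ ℤ`,
`∏_{v ∈ S} ∏_{1 ≤ i ≤ r−1, d_v ∤ i} (1 − q_v^i)
  = ∏_{v ∈ S} ∏_{1 ≤ i ≤ r−1, d_v ∤ i} (q_v^i − 1)` in `ℤ`. -/
theorem prod_one_sub_eq_prod_sub_one {V : Type*} (S : Finset V) (r : ℕ)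
    (hr : 0 < r) (b d m : V → ℕ) (q : V → ℤ)
    (hq : ∀ v ∈ S, 2 ≤ q v)
    (hd : ∀ v ∈ S, 0 < d v) (hm : ∀ v ∈ S, 0 < m v)
    (hcop : ∀ v ∈ S, Nat.Coprime (b v) (d v))
    (hmd : ∀ v ∈ S, m v * d v = r)
    (hint : ∃ n : ℤ, (∑ v ∈ S, (b v : ℚ) / (d v)) = n) :
    (∏ v ∈ S, ∏ i ∈ (Finset.Icc 1 (r - 1)).filter (fun i => ¬ d v ∣ i),
        (1 - q v ^ i)) =
      ∏ v ∈ S, ∏ i ∈ (Finset.Icc 1 (r - 1)).filter (fun i => ¬ d v ∣ i),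
        (q v ^ i - 1) :=
  prod_one_sub_eq_prod_sub_one_general S r b d m q hcop hmd hint
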